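/- (Chain rule for pattern influence, algebraic form of Proposition 1.) Let G be an acyclic directed graph in which the set of paths between any two vertices is finite, let R be a commutative ring, let w assign a weight in R to each edge, and let π = [π₀, π₁, …, πₙ] be a pattern such that for each i < n there exists at least one path from πᵢ to πᵢ₊₁. Then the sum over all paths p ∈ γ(π) of the weight of p equals the product over i = 1, …, n of the sums, over all paths from πᵢ₋₁ to πᵢ, of their weights. -/

import Mathlib

universe v u

/-- A quiver (directed graph) is *acyclic* if for every vertex `a`, the only path from `a`
back to `a` is the nil path. -/
def Quiver.IsAcyclic (V : Type*) [Quiver V] : Prop :=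
  ∀ (a : V) (p : Quiver.Path a a), p = Quiver.Path.nil

/-- The list of vertices visited along a path, including both endpoints
(the starting vertex comes first). -/
def Quiver.Path.visitedVertices {V : Type*} [Quiver V] {a : V} :
    ∀ {b : V}, Quiver.Path a b → List V
  | _, Quiver.Path.nil => [a]
  | b, Quiver.Path.cons p _ => Quiver.Path.visitedVertices p ++ [b]

/-- A path *passes through* a vertex `w` if `w` is one of the vertices visited along it. -/
def Quiver.Path.PassesThrough {V : Type*} [Quiver V] {a b : V}
    (p : Quiver.Path a b) (w : V) : Prop :=
  w ∈ p.visitedVertices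

/-- The weight of a path: the product of the weights of its edges
(the nil path has weight `1`). -/
def Quiver.Path.pathWeight {V : Type*} [Quiver V] {R : Type*} [CommRing R]
    (w : ∀ {a b : V}, (a ⟶ b) → R) {a : V} : ∀ {b : V}, Quiver.Path a b → R
  | _, Quiver.Path.nil => 1
  | _, Quiver.Path.cons p e => Quiver.Path.pathWeight w p * w e

/-!
In an acyclic graph a vertex occurs at most once on a path, so a path through `b` splits
uniquely at `b`, and a vertex from which `b` is reachable can only occur before `b`. Hence the
paths through `π₀, …, πₙ` are exactly the concatenations of a path through `π₀, …, πₙ₋₁` ending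
at `πₙ₋₁` with an arbitrary path from `πₙ₋₁` to `πₙ`, and the weight is multiplicative along
this splitting; induction on `n` gives the product formula.
-/

namespace Quiver

variable {V : Type*} [Quiver V]

namespace Path

@[simp]
lemma visitedVertices_eq_vertices {a b : V} (p : Path a b) : p.visitedVertices = p.vertices := by
  induction p with
  | nil => rfl
  | cons p e ih => simp [visitedVertices, ih]

lemma passesThrough_iff_mem_vertices {a b x : V} (p : Path a b) :
    p.PassesThrough x ↔ x ∈ p.vertices := by
  rw [PassesThrough, visitedVertices_eq_vertices]

lemma pathWeight_eq_weight {R : Type*} [CommRing R] (w : ∀ {a b : V}, (a ⟶ b) → R)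
    {a b : V} (p : Path a b) : p.pathWeight w = p.weight w := by
  induction p with
  | nil => simp [pathWeight]
  | cons p e ih => simp [pathWeight, ih]

lemma mem_vertices_comp {a b c x : V} (p : Path a b) (q : Path b c) :
    x ∈ (p.comp q).vertices ↔ x ∈ p.vertices ∨ x ∈ q.vertices := by
  rw [vertices_comp, ← p.dropLast_append_end_eq]
  simp only [List.dropLast_concat, List.mem_append, List.mem_singleton]
  have := q.start_mem_vertices
  aesop

end Path

namespace IsAcyclic

variable (hG : IsAcyclic V)
include hG

lemma eq_of_path_of_path {a b : V} (p : Path a b) (q : Path b a) : a = b :=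
  p.eq_of_length_zero (Path.nil_of_comp_eq_nil_left (hG a (p.comp q)))

lemma comp_inj {a b : V} {q q' : Path a b} {c : V} {r r' : Path b c}
    (h : q.comp r = q'.comp r') : q = q' ∧ r = r' := by
  induction r with
  | nil =>
    obtain rfl : r' = .nil := hG b r'
    exact ⟨h, rfl⟩
  | cons r e ih =>
    cases r' with
    | nil => exact absurd (hG b (r.cons e)) (Path.cons_ne_nil _ _)
    | cons r' e' =>
      simp only [Path.comp_cons, Path.cons.injEq] at h
      obtain ⟨rfl, hr, he⟩ := h
      obtain ⟨rfl, rfl⟩ := ih hr.eq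
      exact ⟨rfl, by rw [he.eq]⟩

/-- An occurrence of `x` after `b` would close a cycle through `b`. -/
lemma mem_vertices_comp_iff {a b c x : V} (hx : Nonempty (Path x b)) (q : Path a b)
    (r : Path b c) : x ∈ (q.comp r).vertices ↔ x ∈ q.vertices := by
  refine (q.mem_vertices_comp r).trans ⟨?_, Or.inl⟩
  rintro (hq | hr)
  · exact hq
  · obtain ⟨r₁, -, -⟩ := r.exists_eq_comp_of_mem_vertices hr
    obtain rfl := hG.eq_of_path_of_path hx.some r₁
    exact q.end_mem_vertices

lemma sum_pathWeight_subtype_self {R : Type*} [CommRing R] (w : ∀ {a b : V}, (a ⟶ b) → R)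
    {a : V} {P : Path a a → Prop} (hP : P .nil) [Fintype {p : Path a a // P p}] :
    ∑ p : {p : Path a a // P p}, (p : Path a a).pathWeight w = 1 := by
  rw [Fintype.sum_eq_single ⟨.nil, hP⟩ fun p hp => absurd (Subtype.ext (hG a p.1)) hp]
  rfl

lemma sum_pathWeight_passesThrough_eq_mul {R : Type*} [CommRing R]
    (w : ∀ {a b : V}, (a ⟶ b) → R) {ι : Type*} (f : ι → V) (j : ι)
    (hf : ∀ i, Nonempty (Path (f i) (f j))) (a c : V)
    [Fintype {p : Path a c // ∀ i, p.PassesThrough (f i)}]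
    [Fintype {q : Path a (f j) // ∀ i, q.PassesThrough (f i)}] [Fintype (Path (f j) c)] :
    ∑ p : {p : Path a c // ∀ i, p.PassesThrough (f i)}, (p : Path a c).pathWeight w
      = (∑ q : {q : Path a (f j) // ∀ i, q.PassesThrough (f i)},
          (q : Path a (f j)).pathWeight w) * ∑ r : Path (f j) c, r.pathWeight w := by
  have passes_comp (q : Path a (f j)) (r : Path (f j) c) (i : ι) :
      (q.comp r).PassesThrough (f i) ↔ q.PassesThrough (f i) := by
    rw [Path.passesThrough_iff_mem_vertices, Path.passesThrough_iff_mem_vertices,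
      hG.mem_vertices_comp_iff (hf i)]
  let concat (z : {q : Path a (f j) // ∀ i, q.PassesThrough (f i)} × Path (f j) c) :
      {p : Path a c // ∀ i, p.PassesThrough (f i)} :=
    ⟨z.1.1.comp z.2, fun i => (passes_comp _ _ i).2 (z.1.2 i)⟩
  have concat_bijective : Function.Bijective concat := by
    constructor
    · rintro ⟨⟨q, _⟩, r⟩ ⟨⟨q', _⟩, r'⟩ h
      obtain ⟨rfl, rfl⟩ := hG.comp_inj (congrArg Subtype.val h)
      rfl
    · rintro ⟨p, hp⟩
      obtain ⟨q, r, rfl⟩ :=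
        p.exists_eq_comp_of_mem_vertices ((p.passesThrough_iff_mem_vertices).1 (hp j))
      exact ⟨⟨⟨q, fun i => (passes_comp q r i).1 (hp i)⟩, r⟩, rfl⟩
  rw [Fintype.sum_mul_sum, ← Fintype.sum_prod_type']
  refine (Fintype.sum_bijective concat concat_bijective _ _ fun z => ?_).symm
  simp only [concat, Path.pathWeight_eq_weight, Path.weight_comp]

end IsAcyclic

lemma nonempty_path_last {m : ℕ} (π : Fin (m + 1) → V)
    (hπ : ∀ i : Fin m, Nonempty (Path (π i.castSucc) (π i.succ))) (i : Fin (m + 1)) :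
    Nonempty (Path (π i) (π (Fin.last m))) := by
  induction i using Fin.reverseInduction with
  | last => exact ⟨.nil⟩
  | cast i ih => exact ⟨(hπ i).some.comp ih.some⟩

end Quiver

open scoped Classical in
/-- **Chain rule for pattern influence (algebraic form of Proposition 1).**
In an acyclic directed graph with finite path sets and edge weights in a commutative ring,
for any pattern `π = [π₀, …, πₙ]` (each adjacent pair joined by at least one path), the sum
over all paths `p ∈ γ(π)` — the paths from `π₀` to `πₙ` passing through every `πᵢ` — of the
weight of `p` equals the product over `i = 1, …, n` of the total weights of the paths from
`πᵢ₋₁` to `πᵢ`. -/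
theorem sum_weight_pattern_eq_prod {V : Type u} [Quiver.{v + 1} V]
    [∀ a b : V, Fintype (Quiver.Path a b)] {R : Type*} [CommRing R]
    (hG : Quiver.IsAcyclic V) (w : ∀ {a b : V}, (a ⟶ b) → R)
    {n : ℕ} (π : Fin (n + 1) → V)
    (hπ : ∀ i : Fin n, Nonempty (Quiver.Path (π i.castSucc) (π i.succ))) :
    (∑ p : {p : Quiver.Path (π 0) (π (Fin.last n)) //
        ∀ i : Fin (n + 1), p.PassesThrough (π i)},
        (p : Quiver.Path (π 0) (π (Fin.last n))).pathWeight w)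
      = ∏ i : Fin n, ∑ p : Quiver.Path (π i.castSucc) (π i.succ), p.pathWeight w := by
  induction n with
  | zero =>
    refine (hG.sum_pathWeight_subtype_self w fun i => ?_).trans (Fin.prod_univ_zero _).symm
    rw [Fin.fin_one_eq_zero i]
    exact List.mem_singleton_self _
  | succ n ih =>
    have hπ' (i : Fin n) : Nonempty (Quiver.Path (π i.castSucc.castSucc) (π i.castSucc.succ)) :=
      Fin.succ_castSucc i ▸ hπ i.castSucc
    have passes_all_iff (p : Quiver.Path (π 0) (π (Fin.last (n + 1)))) :
        (∀ i, p.PassesThrough (π i)) ↔ ∀ i : Fin (n + 1), p.PassesThrough (π i.castSucc) := by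
      rw [Fin.forall_fin_succ',
        and_iff_left ((p.passesThrough_iff_mem_vertices).2 p.end_mem_vertices)]
    have ih' := ih (fun i => π i.castSucc) hπ'
    simp only [Fin.castSucc_zero] at ih'
    rw [Fin.prod_univ_castSucc]
    simp only [Fin.succ_castSucc, Fin.succ_last]
    rw [← ih']
    exact (Fintype.sum_equiv (Equiv.subtypeEquivRight passes_all_iff) _ _ fun _ => rfl).trans
      (hG.sum_pathWeight_passesThrough_eq_mul w (fun i => π i.castSucc) (Fin.last n)
        (Quiver.nonempty_path_last _ hπ') _ _)
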